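/- Let X be a complex Banach space with property (Δ). Let (U_k)_{k=1}^∞ and (V_k)_{k=1}^∞ be sequences in L(X) with sup_n max_{ε_k=±1} ‖Σ_{k=1}^n ε_k U_k‖ ≤ M and sup_n max_{ε_k=±1} ‖Σ_{k=1}^n ε_k V_k‖ ≤ M, such that every U_j commutes with every V_k. Then there is a constant C, depending only on the property (Δ) constant of X, such that the family { Σ_{k=1}^n U_k V_k : n ∈ ℕ } is R-bounded with constant C·M². -/

import Mathlib

open MeasureTheory Complex Set Filter

noncomputable section

/-- The sign `±1` attached to a Boolean. -/
def bsign (b : Bool) : ℝ := if b then 1 else -1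

section RadDefs

variable {Y : Type*} [NormedAddCommGroup Y] [NormedSpace ℂ Y]

/-- `E ‖∑ εₖ xₖ‖²`, the average over all `2^n` choices of signs. -/
def radAvg {n : ℕ} (x : Fin n → Y) : ℝ :=
  (∑ ε : Fin n → Bool, ‖∑ k, bsign (ε k) • x k‖ ^ 2) / (2 ^ n : ℝ)

/-- `max_{εₖ = ±1} ‖∑ εₖ xₖ‖`. -/
def signSup {n : ℕ} (x : Fin n → Y) : ℝ :=
  ⨆ ε : Fin n → Bool, ‖∑ k, bsign (ε k) • x k‖

/-- `E ‖∑_{j,k} ε_j η_k x_{jk}‖²`, average over two independent families of signs. -/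
def radAvg2 {n : ℕ} (x : Fin n → Fin n → Y) : ℝ :=
  (∑ ε : Fin n → Bool, ∑ η : Fin n → Bool,
    ‖∑ j, ∑ k, (bsign (ε j) * bsign (η k)) • x j k‖ ^ 2) / ((2 ^ n : ℝ) * (2 ^ n : ℝ))

end RadDefs

section Bounded

variable {X : Type*} [NormedAddCommGroup X] [NormedSpace ℂ X]

/-- Rademacher boundedness with constant `C`. -/
def RBoundedWith (C : ℝ) (𝒯 : Set (X →L[ℂ] X)) : Prop :=
  ∀ (n : ℕ) (T : Fin n → X →L[ℂ] X), (∀ k, T k ∈ 𝒯) → ∀ x : Fin n → X,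
    Real.sqrt (radAvg fun k => T k (x k)) ≤ C * Real.sqrt (radAvg x)

/-- Weak Rademacher boundedness with constant `C`. -/
def WRBoundedWith (C : ℝ) (𝒯 : Set (X →L[ℂ] X)) : Prop :=
  ∀ (n : ℕ) (T : Fin n → X →L[ℂ] X), (∀ k, T k ∈ 𝒯) →
    ∀ (x : Fin n → X) (xs : Fin n → X →L[ℂ] ℂ),
      ∑ k, ‖xs k (T k (x k))‖ ≤ C * Real.sqrt (radAvg x) * Real.sqrt (radAvg xs)

/-- Unconditional boundedness with constant `C`. -/
def UBoundedWith (C : ℝ) (𝒯 : Set (X →L[ℂ] X)) : Prop :=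
  ∀ (n : ℕ) (T : Fin n → X →L[ℂ] X), (∀ k, T k ∈ 𝒯) →
    ∀ (x : Fin n → X) (xs : Fin n → X →L[ℂ] ℂ),
      ∑ k, ‖xs k (T k (x k))‖ ≤ C * signSup x * signSup xs

end Bounded

/-- Pisier's property (α) with constant `C`. -/
def PropAlphaWith (C : ℝ) (X : Type*) [NormedAddCommGroup X] [NormedSpace ℂ X] : Prop :=
  ∀ (n : ℕ) (x : Fin n → Fin n → X) (α : Fin n → Fin n → ℂ), (∀ j k, ‖α j k‖ ≤ 1) →
    Real.sqrt (radAvg2 fun j k => α j k • x j k) ≤ C * Real.sqrt (radAvg2 x)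

/-- Property (A) with constant `C`. -/
def PropAWith (C : ℝ) (X : Type*) [NormedAddCommGroup X] [NormedSpace ℂ X] : Prop :=
  ∀ (n : ℕ) (x : Fin n → Fin n → X) (xs : Fin n → Fin n → X →L[ℂ] ℂ),
    ∑ j, ∑ k, ‖xs j k (x j k)‖ ≤ C * Real.sqrt (radAvg2 x) * Real.sqrt (radAvg2 xs)

/-- Property (Δ) with constant `C`. -/
def PropDeltaWith (C : ℝ) (X : Type*) [NormedAddCommGroup X] [NormedSpace ℂ X] : Prop :=
  ∀ (n : ℕ) (x : Fin n → Fin n → X),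
    Real.sqrt (radAvg2 fun j k => if (k : ℕ) ≤ (j : ℕ) then x j k else 0)
      ≤ C * Real.sqrt (radAvg2 x)

/-!
Write `Tₖ = ∑_{m < Nₖ} U_m V_m` and `y_{kj} = U_j xₖ` for `j < Nₖ`, `y_{kj} = 0` otherwise.
Since `E_ε εₘ εⱼ = [m = j]` and `V_j U_j = U_j V_j`, `∑ₖ δₖ Tₖ xₖ` is the sign average of
`(∑ₘ εₘ Vₘ)(∑ₖ ∑ⱼ δₖ εⱼ y_{kj})`, so `E‖∑ₖ δₖ Tₖ xₖ‖² ≤ M² E‖∑ₖ ∑ⱼ δₖ εⱼ y_{kj}‖²`.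
The array `y` is the array `(U_j xₖ)` cut along the staircase `j < Nₖ`; ordering the rows by `Nₖ`
and interleaving rows and columns turns the staircase into the lower triangle of a square array,
so property (Δ) bounds the last average by `CΔ² E‖∑ₖ ∑ⱼ δₖ εⱼ U_j xₖ‖²`. Finally
`∑ₖ ∑ⱼ δₖ εⱼ U_j xₖ = (∑ⱼ εⱼ U_j)(∑ₖ δₖ xₖ)` has norm at most `M ‖∑ₖ δₖ xₖ‖`.
-/

open Finset Function
open scoped BigOperators

lemma bsign_not (b : Bool) : bsign (!b) = -bsign b := by
  cases b <;> simp [bsign]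

lemma bsign_mul_self (b : Bool) : bsign b * bsign b = 1 := by
  cases b <;> simp [bsign]

lemma sum_bsign_mul_bsign {n : ℕ} (j k : Fin n) :
    ∑ ε : Fin n → Bool, bsign (ε j) * bsign (ε k) = if j = k then (2 ^ n : ℝ) else 0 := by
  split_ifs with h
  · simp [h, bsign_mul_self]
  · -- flipping the sign at `j` changes the sign of every summand
    have hflip : Involutive fun ε : Fin n → Bool => update ε j (!ε j) := fun ε => by simp
    have := Fintype.sum_bijective _ hflip.bijective (fun ε => bsign (ε j) * bsign (ε k))
      (fun ε => -(bsign (ε j) * bsign (ε k))) fun ε => by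
        simp [update_of_ne (Ne.symm h), bsign_not]
    rw [sum_neg_distrib] at this
    linarith

lemma radAvg_eq_expect {Y : Type*} [NormedAddCommGroup Y] [NormedSpace ℂ Y] {n : ℕ}
    (x : Fin n → Y) : radAvg x = 𝔼 ε : Fin n → Bool, ‖∑ k, bsign (ε k) • x k‖ ^ 2 := by
  simp [radAvg, Fintype.expect_eq_sum_div_card]

lemma expect_comp_of_injective {ι κ β M : Type*} [Fintype ι] [DecidableEq ι] [Fintype κ]
    [DecidableEq κ] [Fintype β] [Nonempty β] [AddCommMonoid M] [Module ℚ≥0 M] {p : ι → κ}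
    (hp : Injective p) (g : (ι → β) → M) : 𝔼 ε : κ → β, g (ε ∘ p) = 𝔼 ε : ι → β, g ε := by
  let restrict := Equiv.piEquivPiSubtypeProd (· ∈ Set.range p) fun _ => β
  let reindex := (Equiv.ofInjective p hp).arrowCongr (Equiv.refl β)
  calc 𝔼 ε : κ → β, g (ε ∘ p)
      = 𝔼 εs : ((Set.range p) → β) × (((Set.range p)ᶜ : Set κ) → β), g (reindex.symm εs.1) :=
        Fintype.expect_equiv restrict _ _ fun _ => rfl
    _ = 𝔼 ε : ι → β, g ε := by
        rw [← univ_product_univ, expect_product' univ univ fun u _ => g (reindex.symm u)]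
        simp only [Fintype.expect_const]
        exact Fintype.expect_equiv reindex.symm _ _ fun _ => rfl

lemma sq_expect_le_expect_sq {ι : Type*} [Fintype ι] [Nonempty ι] (f : ι → ℝ) :
    (𝔼 i, f i) ^ 2 ≤ 𝔼 i, f i ^ 2 := by
  simpa using expect_mul_sq_le_sq_mul_sq univ f fun _ => 1

lemma norm_sum_fin_bsign_smul_le {G : Type*} [SeminormedAddCommGroup G] [SMul ℝ G]
    {W : ℕ → G} {M : ℝ} (hW : ∀ (n : ℕ) (ε : ℕ → Bool), ‖∑ k ∈ range n, bsign (ε k) • W k‖ ≤ M)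
    (b : ℕ) (ε : Fin b → Bool) : ‖∑ j : Fin b, bsign (ε j) • W j‖ ≤ M := by
  have := hW b fun k => if h : k < b then ε ⟨k, h⟩ else true
  rw [← Fin.sum_univ_eq_sum_range (fun k => bsign (if h : k < b then ε ⟨k, h⟩ else true) • W k)]
    at this
  simpa using this

lemma sum_fin_ite_lt {A : Type*} [AddCommMonoid A] (f : ℕ → A) {N b : ℕ} (h : N ≤ b) :
    ∑ j : Fin b, (if (j : ℕ) < N then f j else 0) = ∑ m ∈ range N, f m := by
  rw [Fin.sum_univ_eq_sum_range (fun m => if m < N then f m else 0), ← sum_filter]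
  congr 1
  ext m
  simp only [mem_filter, Finset.mem_range]
  omega

section RademacherAverages

variable {E F : Type*} [NormedAddCommGroup E] [NormedSpace ℂ E]
  [NormedAddCommGroup F] [NormedSpace ℂ F]

/-- `E_δ E_ε ‖∑ᵢ ∑ⱼ δᵢ εⱼ yᵢⱼ‖²` for a rectangular array. -/
def radAvgRect {a b : ℕ} (y : Fin a → Fin b → E) : ℝ :=
  𝔼 δ : Fin a → Bool, radAvg fun j => ∑ i, bsign (δ i) • y i j

lemma radAvg_nonneg {n : ℕ} (x : Fin n → E) : 0 ≤ radAvg x := by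
  unfold radAvg
  positivity

lemma radAvgRect_nonneg {a b : ℕ} (y : Fin a → Fin b → E) : 0 ≤ radAvgRect y :=
  expect_nonneg fun _ _ => radAvg_nonneg _

lemma radAvg2_eq_radAvgRect {n : ℕ} (x : Fin n → Fin n → E) : radAvg2 x = radAvgRect x := by
  simp only [radAvg2, radAvgRect, radAvg, Fintype.expect_eq_sum_div_card, Fintype.card_fun,
    Fintype.card_bool, Fintype.card_fin, Nat.cast_pow, Nat.cast_ofNat, ← sum_div, div_div]
  congr 1
  refine sum_congr rfl fun δ _ => sum_congr rfl fun ε _ => ?_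
  rw [sum_comm]
  simp only [smul_sum, smul_smul, mul_comm]

lemma sum_bsign_smul_apply_sum_bsign_smul {b : ℕ} (S : Fin b → E →L[ℂ] F) (y : Fin b → E) :
    ∑ ε : Fin b → Bool, (∑ m, bsign (ε m) • S m) (∑ j, bsign (ε j) • y j)
      = (2 ^ b : ℝ) • ∑ j, S j (y j) := by
  simp only [_root_.sum_apply, _root_.smul_apply, map_sum, ContinuousLinearMap.map_smul_of_tower,
    smul_sum, smul_smul]
  rw [sum_comm]
  refine sum_congr rfl fun j _ => ?_
  rw [sum_comm]
  simp [← sum_smul, sum_bsign_mul_bsign]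

variable {b : ℕ} (S : Fin b → E →L[ℂ] F) {M : ℝ}

lemma norm_sum_apply_sq_le (hS : ∀ ε : Fin b → Bool, ‖∑ m, bsign (ε m) • S m‖ ≤ M)
    (y : Fin b → E) : ‖∑ j, S j (y j)‖ ^ 2 ≤ M ^ 2 * radAvg y := by
  set w : (Fin b → Bool) → E := fun ε => ∑ j, bsign (ε j) • y j
  have hsum := congrArg norm (sum_bsign_smul_apply_sum_bsign_smul S y)
  rw [norm_smul, Real.norm_of_nonneg (by positivity)] at hsum
  have hmean : ‖∑ j, S j (y j)‖ ≤ 𝔼 ε, M * ‖w ε‖ := by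
    rw [Fintype.expect_eq_sum_div_card, le_div_iff₀ (by positivity)]
    simp only [Fintype.card_fun, Fintype.card_bool, Fintype.card_fin, Nat.cast_pow,
      Nat.cast_ofNat]
    calc ‖∑ j, S j (y j)‖ * 2 ^ b = ‖∑ ε, (∑ m, bsign (ε m) • S m) (w ε)‖ := by
          rw [hsum, mul_comm]
      _ ≤ ∑ ε, M * ‖w ε‖ := (norm_sum_le _ _).trans <| sum_le_sum fun ε _ =>
          (ContinuousLinearMap.le_opNorm _ _).trans
            (mul_le_mul_of_nonneg_right (hS ε) (norm_nonneg _))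
  calc ‖∑ j, S j (y j)‖ ^ 2 ≤ (𝔼 ε, M * ‖w ε‖) ^ 2 :=
        pow_le_pow_left₀ (norm_nonneg _) hmean 2
    _ ≤ 𝔼 ε, (M * ‖w ε‖) ^ 2 := sq_expect_le_expect_sq _
    _ = M ^ 2 * radAvg y := by
        simp only [radAvg_eq_expect, mul_expect, mul_pow, w]

variable (hS : ∀ ε : Fin b → Bool, ‖∑ m, bsign (ε m) • S m‖ ≤ M)
include hS

lemma radAvg_sum_apply_le {a : ℕ} (y : Fin a → Fin b → E) :
    radAvg (fun i => ∑ j, S j (y i j)) ≤ M ^ 2 * radAvgRect y := by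
  rw [radAvg_eq_expect, radAvgRect, mul_expect]
  refine expect_le_expect fun δ _ => ?_
  have hswap : ∑ i, bsign (δ i) • ∑ j, S j (y i j) = ∑ j, S j (∑ i, bsign (δ i) • y i j) := by
    simp only [smul_sum, map_sum, ContinuousLinearMap.map_smul_of_tower]
    exact sum_comm
  rw [hswap]
  exact norm_sum_apply_sq_le S hS _

lemma radAvg_apply_le (v : E) : radAvg (fun j => S j v) ≤ M ^ 2 * ‖v‖ ^ 2 := by
  rw [radAvg_eq_expect]
  refine expect_le univ_nonempty fun ε _ => ?_
  have hle : ‖(∑ m, bsign (ε m) • S m) v‖ ≤ M * ‖v‖ :=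
    (ContinuousLinearMap.le_opNorm _ _).trans (mul_le_mul_of_nonneg_right (hS ε) (norm_nonneg _))
  simpa [mul_pow, _root_.sum_apply] using pow_le_pow_left₀ (norm_nonneg _) hle 2

lemma radAvgRect_apply_le {a : ℕ} (x : Fin a → E) :
    radAvgRect (fun i j => S j (x i)) ≤ M ^ 2 * radAvg x := by
  rw [radAvgRect, radAvg_eq_expect, mul_expect]
  refine expect_le_expect fun δ _ => ?_
  have hpull : (fun j => ∑ i, bsign (δ i) • S j (x i))
      = fun j => S j (∑ i, bsign (δ i) • x i) := by
    simp only [map_sum, ContinuousLinearMap.map_smul_of_tower]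
  rw [hpull]
  exact radAvg_apply_le S hS _

end RademacherAverages

section Embedding

def embedArray {A : Type*} [AddCommMonoid A] {a b m n : ℕ} (p : Fin a → Fin m)
    (q : Fin b → Fin n) (y : Fin a → Fin b → A) : Fin m → Fin n → A :=
  fun J K => ∑ i, ∑ j, if p i = J ∧ q j = K then y i j else 0

lemma embedArray_truncate {A : Type*} [AddCommMonoid A] {a b m n : ℕ} {p : Fin a → Fin m}
    {q : Fin b → Fin n} {r : Fin a → ℕ}
    (hpq : ∀ i j, (q j : ℕ) ≤ p i ↔ (j : ℕ) < r i) (y : Fin a → Fin b → A) :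
    (fun (J : Fin m) (K : Fin n) => if (K : ℕ) ≤ J then embedArray p q y J K else 0)
      = embedArray p q (fun i j => if (j : ℕ) < r i then y i j else 0) := by
  ext J K
  simp only [embedArray]
  rw [ite_sum_zero]
  refine sum_congr rfl fun i _ => ?_
  rw [ite_sum_zero]
  refine sum_congr rfl fun j _ => ?_
  by_cases h : p i = J ∧ q j = K
  · obtain ⟨rfl, rfl⟩ := h
    simp [hpq]
  · simp [h]

variable {E : Type*} [NormedAddCommGroup E] [NormedSpace ℂ E]

lemma radAvg_sum_ite_eq {b n : ℕ} {q : Fin b → Fin n} (hq : Injective q) (z : Fin b → E) :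
    radAvg (fun K => ∑ j, if q j = K then z j else 0) = radAvg z := by
  have hsum : ∀ ε : Fin n → Bool,
      ∑ K, bsign (ε K) • ∑ j, (if q j = K then z j else 0) = ∑ j, bsign ((ε ∘ q) j) • z j := by
    intro ε
    simp only [smul_sum, smul_ite, smul_zero]
    rw [sum_comm]
    simp
  simp only [radAvg_eq_expect, hsum]
  exact expect_comp_of_injective hq fun ε => ‖∑ j, bsign (ε j) • z j‖ ^ 2

lemma sum_smul_embedArray {a b m n : ℕ} (p : Fin a → Fin m) (q : Fin b → Fin n)
    (y : Fin a → Fin b → E) (c : Fin m → ℝ) (K : Fin n) :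
    ∑ J, c J • embedArray p q y J K = ∑ j, if q j = K then ∑ i, c (p i) • y i j else 0 := by
  simp only [embedArray, smul_sum, smul_ite, smul_zero, ite_and]
  rw [sum_comm]
  conv_lhs => enter [2, i]; rw [sum_comm]
  simp only [sum_ite_eq, Finset.mem_univ, if_true]
  rw [sum_comm]
  simp only [sum_ite_irrel, sum_const_zero]

lemma radAvgRect_embedArray {a b m n : ℕ} {p : Fin a → Fin m} {q : Fin b → Fin n}
    (hp : Injective p) (hq : Injective q) (y : Fin a → Fin b → E) :
    radAvgRect (embedArray p q y) = radAvgRect y := by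
  simp only [radAvgRect, sum_smul_embedArray, radAvg_sum_ite_eq hq]
  exact expect_comp_of_injective hp fun δ => radAvg fun j => ∑ i, bsign (δ i) • y i j

end Embedding

theorem exists_staircase {a b : ℕ} (r : Fin a → ℕ) (hr : ∀ i, r i ≤ b) :
    ∃ (p : Fin a → Fin (a + b)) (q : Fin b → Fin (a + b)), Injective p ∧ Injective q ∧
      ∀ i j, (q j : ℕ) ≤ p i ↔ (j : ℕ) < r i := by
  -- the rows, sorted by `r` with ties broken by index, are interleaved with the columns so that
  -- row `i` comes after exactly the columns `j < r i`
  let key : Fin a → ℕ ×ₗ Fin a := fun i => toLex (r i, i)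
  let before : Fin a → ℕ := fun i => #{i' | key i' < key i}
  let upto : ℕ → ℕ := fun j => #{i' | r i' ≤ j}
  have key_lt {i i'} (h : r i < r i') : key i < key i' := Prod.Lex.toLex_lt_toLex.2 (.inl h)
  have r_le {i i'} (h : key i < key i') : r i ≤ r i' := by
    rcases Prod.Lex.toLex_lt_toLex.1 h with h | ⟨h, -⟩ <;> simp_all [le_of_lt]
  have before_lt {i i'} (h : key i < key i') : before i < before i' := by
    refine card_lt_card ⟨fun i'' hi'' => ?_, fun hsub => ?_⟩
    · simp only [mem_filter, Finset.mem_univ, true_and] at hi'' ⊢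
      exact hi''.trans h
    · exact lt_irrefl _ (mem_filter.1 (hsub (mem_filter.2 ⟨Finset.mem_univ _, h⟩))).2
  have before_lt_card (i) : before i < a := by
    simpa using card_lt_card (s := {i' | key i' < key i}) (t := univ)
      ⟨subset_univ _, fun hsub => by simpa using hsub (Finset.mem_univ i)⟩
  have upto_le (j) : upto j ≤ a := (card_filter_le _ _).trans (by simp)
  have upto_mono {j j'} (h : j ≤ j') : upto j ≤ upto j' :=
    card_le_card fun i' => by simpa using fun hi' => hi'.trans h
  refine ⟨fun i => ⟨r i + before i, by have := hr i; have := before_lt_card i; omega⟩,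
    fun j => ⟨j + upto j, by have := upto_le j; omega⟩, fun i i' h => ?_,
    StrictMono.injective fun j j' h => ?_, fun i j => ?_⟩
  · have h : r i + before i = r i' + before i' := Fin.mk.inj_iff.1 h
    rcases lt_trichotomy (key i) (key i') with hlt | heq | hlt
    · have := r_le hlt; have := before_lt hlt; omega
    · exact (Prod.mk.inj (toLex.injective heq)).2
    · have := r_le hlt; have := before_lt hlt; omega
  · have := upto_mono (le_of_lt h)
    show (j : ℕ) + upto j < j' + upto j'
    omega
  · show (j : ℕ) + upto j ≤ r i + before i ↔ (j : ℕ) < r i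
    constructor
    · intro hle
      by_contra! hij
      have : before i < upto j := by
        refine card_lt_card ⟨fun i' hi' => ?_, fun hsub => ?_⟩
        · simp only [mem_filter, Finset.mem_univ, true_and] at hi' ⊢
          exact (r_le hi').trans hij
        · exact lt_irrefl _ (mem_filter.1 (hsub (mem_filter.2 ⟨Finset.mem_univ _, hij⟩))).2
      omega
    · intro hij
      have : upto j ≤ before i :=
        card_le_card fun i' => by simpa using fun hi' => key_lt (hi'.trans_lt hij)
      omega

theorem PropDeltaWith.radAvgRect_truncate_le {C : ℝ} {X : Type*} [NormedAddCommGroup X]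
    [NormedSpace ℂ X] (hΔ : PropDeltaWith C X) {a b : ℕ} (y : Fin a → Fin b → X)
    (r : Fin a → ℕ) :
    radAvgRect (fun i j => if (j : ℕ) < r i then y i j else 0) ≤ C ^ 2 * radAvgRect y := by
  obtain ⟨p, q, hp, hq, hpq⟩ := exists_staircase (fun i => min (r i) b) fun i => min_le_right _ _
  have hpq' (i j) : (q j : ℕ) ≤ p i ↔ (j : ℕ) < r i := by simp [hpq, j.isLt]
  have hsqrt := hΔ (a + b) (embedArray p q y)
  rw [embedArray_truncate hpq', radAvg2_eq_radAvgRect, radAvg2_eq_radAvgRect,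
    radAvgRect_embedArray hp hq, radAvgRect_embedArray hp hq] at hsqrt
  have hsq := pow_le_pow_left₀ (Real.sqrt_nonneg _) hsqrt 2
  rwa [mul_pow, Real.sq_sqrt (radAvgRect_nonneg _), Real.sq_sqrt (radAvgRect_nonneg _)] at hsq

/-- In a space with property (Δ) (with constant `CΔ`), if the sign-sums of
`(U_k)` and `(V_k)` are uniformly bounded by `M` and every `U_j` commutes with every `V_k`,
then `{∑_{k<n} U_k V_k : n ∈ ℕ}` is R-bounded with constant `C·M²`, where `C` depends only
on the property (Δ) constant. -/
theorem stmt_6 : ∀ CΔ : ℝ, ∃ C : ℝ,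
    ∀ (X : Type) [NormedAddCommGroup X] [NormedSpace ℂ X] [CompleteSpace X],
    PropDeltaWith CΔ X →
    ∀ (U V : ℕ → X →L[ℂ] X) (M : ℝ),
      (∀ (n : ℕ) (ε : ℕ → Bool), ‖∑ k ∈ Finset.range n, bsign (ε k) • U k‖ ≤ M) →
      (∀ (n : ℕ) (ε : ℕ → Bool), ‖∑ k ∈ Finset.range n, bsign (ε k) • V k‖ ≤ M) →
      (∀ j k : ℕ, U j ∘L V k = V k ∘L U j) →
      RBoundedWith (C * M ^ 2)
        {W | ∃ n : ℕ, W = ∑ k ∈ Finset.range n, (U k ∘L V k)} := by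
  intro CΔ
  refine ⟨|CΔ|, fun X _ _ _ hΔ U V M hU hV hcomm n T hT x => ?_⟩
  choose N hN using hT
  set b := univ.sup N
  let y : Fin n → Fin b → X := fun k j => if (j : ℕ) < N k then U j (x k) else 0
  have hTx : (fun k => T k (x k)) = fun k => ∑ j : Fin b, V j (y k j) := by
    ext k
    rw [hN k, _root_.sum_apply, ← sum_fin_ite_lt _ (le_sup (Finset.mem_univ k))]
    refine sum_congr rfl fun j _ => ?_
    simp only [y, apply_ite (V _), map_zero, hcomm, ContinuousLinearMap.comp_apply]
  have hmain : radAvg (fun k => T k (x k)) ≤ (|CΔ| * M ^ 2) ^ 2 * radAvg x :=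
    calc radAvg (fun k => T k (x k)) ≤ M ^ 2 * radAvgRect y :=
          hTx ▸ radAvg_sum_apply_le _ (norm_sum_fin_bsign_smul_le hV b) y
      _ ≤ M ^ 2 * (CΔ ^ 2 * radAvgRect fun k (j : Fin b) => U j (x k)) := by
          gcongr
          exact hΔ.radAvgRect_truncate_le _ N
      _ ≤ M ^ 2 * (CΔ ^ 2 * (M ^ 2 * radAvg x)) := by
          gcongr
          exact radAvgRect_apply_le _ (norm_sum_fin_bsign_smul_le hU b) x
      _ = (|CΔ| * M ^ 2) ^ 2 * radAvg x := by rw [mul_pow, sq_abs]; ring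
  calc √(radAvg fun k => T k (x k)) ≤ √((|CΔ| * M ^ 2) ^ 2 * radAvg x) :=
        Real.sqrt_le_sqrt hmain
    _ = |CΔ| * M ^ 2 * √(radAvg x) := by
        rw [Real.sqrt_mul (by positivity), Real.sqrt_sq (by positivity)]
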